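/- Let L₁ > 0, L₂ + L₃ ≥ 0, and let Q : ℝ³ → S₀ be a smooth compactly supported map. Then ∫_{ℝ³} |∇M_Q|² dx ≥ L₁² ∫_{ℝ³} |∇ΔQ|² dx + 2L₁(L₂+L₃) ∫_{ℝ³} |Δ div Q|² dx, where |∇M_Q|² = Σ_{α,β,γ}(∂_γ (M_Q)_{αβ})², |∇ΔQ|² = Σ_{α,β,γ}(∂_γ ΔQ_{αβ})² and |Δ div Q|² = Σ_α (Δ(div Q)_α)². -/

import Mathlib

open Matrix Finset MeasureTheory

noncomputable section

/-- Partial derivative in the `k`-th coordinate direction. -/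
def pd (k : Fin 3) (f : (Fin 3 → ℝ) → ℝ) (x : Fin 3 → ℝ) : ℝ :=
  fderiv ℝ f x (Pi.single k 1)

/-- The `M_Q` elastic part of the molecular field. -/
def MQ (L₁ L₂ L₃ : ℝ) (Q : (Fin 3 → ℝ) → Matrix (Fin 3) (Fin 3) ℝ) (i j : Fin 3)
    (x : Fin 3 → ℝ) : ℝ :=
  L₁ * (∑ k : Fin 3, pd k (pd k (fun y => Q y i j)) x)
    + (L₂ + L₃) / 2 *
      ((∑ k : Fin 3, pd k (pd j (fun y => Q y i k)) x)
        + (∑ k : Fin 3, pd k (pd i (fun y => Q y j k)) x)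
        - 2 / 3 * (if i = j then (1 : ℝ) else 0)
            * ∑ k : Fin 3, ∑ p : Fin 3, pd k (pd p (fun y => Q y k p)) x)

/-! ### Auxiliary toolkit -/

/-- Smooth and compactly supported. -/
structure Nice (f : (Fin 3 → ℝ) → ℝ) : Prop where
  smooth : ContDiff ℝ (⊤ : ℕ∞) f
  supp : HasCompactSupport f

namespace Nice
variable {f g : (Fin 3 → ℝ) → ℝ}

theorem pd (hf : Nice f) (k : Fin 3) : Nice (pd k f) :=
  ⟨(hf.smooth.fderiv_right (by simp)).clm_apply contDiff_const,
   (hf.supp.fderiv ℝ).comp_left (g := fun L : (Fin 3 → ℝ) →L[ℝ] ℝ => L (Pi.single k 1)) rfl⟩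

theorem add (hf : Nice f) (hg : Nice g) : Nice (fun x => f x + g x) :=
  ⟨hf.smooth.add hg.smooth, hf.supp.add hg.supp⟩

theorem mul (hf : Nice f) (hg : Nice g) : Nice (fun x => f x * g x) :=
  ⟨hf.smooth.mul hg.smooth, hf.supp.mul_right⟩

theorem const_mul (hf : Nice f) (c : ℝ) : Nice (fun x => c * f x) :=
  ⟨contDiff_const.mul hf.smooth, hf.supp.mul_left⟩

theorem sub (hf : Nice f) (hg : Nice g) : Nice (fun x => f x - g x) :=
  ⟨hf.smooth.sub hg.smooth, by
    have := HasCompactSupport.add hf.supp (HasCompactSupport.neg hg.supp)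
    simp only [sub_eq_add_neg]; exact this⟩

theorem sq (hf : Nice f) : Nice (fun x => f x ^ 2) :=
  ⟨hf.smooth.pow 2, by simpa [pow_two] using (hf.mul hf).supp⟩

theorem sum {ι : Type*} {s : Finset ι} {F : ι → (Fin 3 → ℝ) → ℝ} (h : ∀ i ∈ s, Nice (F i)) :
    Nice (fun x => ∑ i ∈ s, F i x) := by
  classical
  induction s using Finset.induction with
  | empty => exact ⟨by simpa using contDiff_const, by simp only [Finset.sum_empty]; exact HasCompactSupport.zero⟩
  | @insert a s hi ih =>
    simp only [Finset.sum_insert hi]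
    exact (h a (Finset.mem_insert_self a s)).add
      (ih fun i hi' => h i (Finset.mem_insert_of_mem hi'))

theorem integrable (hf : Nice f) : Integrable f :=
  hf.smooth.continuous.integrable_of_hasCompactSupport hf.supp

theorem diff (hf : Nice f) : Differentiable ℝ f := hf.smooth.differentiable (by simp)

end Nice

section Toolkit
variable {f g : (Fin 3 → ℝ) → ℝ}

theorem pd_sum {ι : Type*} (s : Finset ι) (F : ι → (Fin 3 → ℝ) → ℝ)
    (h : ∀ i ∈ s, Differentiable ℝ (F i)) (k : Fin 3) (x : Fin 3 → ℝ) :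
    pd k (fun y => ∑ i ∈ s, F i y) x = ∑ i ∈ s, pd k (F i) x := by
  simp only [pd]
  rw [fderiv_fun_sum (fun i hi => (h i hi).differentiableAt)]
  simp

theorem pd_sum3 {F : Fin 3 → (Fin 3 → ℝ) → ℝ} (h : ∀ i, Differentiable ℝ (F i)) (k : Fin 3) :
    pd k (fun y => ∑ i : Fin 3, F i y) = fun x => ∑ i : Fin 3, pd k (F i) x :=
  funext fun x => pd_sum _ _ (fun i _ => h i) k x

theorem pd_zero_fn (k : Fin 3) : pd k (fun _ => (0 : ℝ)) = fun _ => 0 := by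
  funext x; simp [pd]

theorem pd_comm (hf : ContDiff ℝ (⊤ : ℕ∞) f) (k j : Fin 3) : pd k (pd j f) = pd j (pd k f) := by
  funext x
  have hd : DifferentiableAt ℝ (fderiv ℝ f) x :=
    ((hf.fderiv_right (m := 1) (by rw [one_add_one_eq_two, ← WithTop.coe_ofNat]; exact WithTop.coe_le_coe.mpr le_top)).differentiable one_ne_zero) x
  have key : ∀ a b : Fin 3, pd a (pd b f) x
      = fderiv ℝ (fderiv ℝ f) x (Pi.single a 1) (Pi.single b 1) := by
    intro a b
    show fderiv ℝ (fun y => (fderiv ℝ f y) (Pi.single b 1)) x (Pi.single a 1) = _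
    rw [fderiv_clm_apply hd (differentiableAt_const _)]
    simp
  rw [key, key]
  exact (hf.contDiffAt.isSymmSndFDerivAt (by simp only [minSmoothness_of_isRCLikeNormedField]; rw [← WithTop.coe_ofNat]; exact WithTop.coe_le_coe.mpr le_top)) _ _

theorem pd_add (hf : Differentiable ℝ f) (hg : Differentiable ℝ g) (k : Fin 3) (x : Fin 3 → ℝ) :
    pd k (fun y => f y + g y) x = pd k f x + pd k g x := by
  simp only [pd]; rw [fderiv_fun_add hf.differentiableAt hg.differentiableAt]; simp

theorem pd_sub (hf : Differentiable ℝ f) (hg : Differentiable ℝ g) (k : Fin 3) (x : Fin 3 → ℝ) :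
    pd k (fun y => f y - g y) x = pd k f x - pd k g x := by
  simp only [pd]; rw [fderiv_fun_sub hf.differentiableAt hg.differentiableAt]; simp

theorem pd_const_mul (hf : Differentiable ℝ f) (c : ℝ) (k : Fin 3) (x : Fin 3 → ℝ) :
    pd k (fun y => c * f y) x = c * pd k f x := by
  simp only [pd]; rw [fderiv_const_mul hf.differentiableAt]; simp

theorem ibp (hf : Nice f) (hg : Nice g) (k : Fin 3) :
    ∫ x, pd k f x * g x = - ∫ x, f x * pd k g x := by
  have h := integral_mul_fderiv_eq_neg_fderiv_mul_of_integrable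
    (f := f) (g := g) (v := Pi.single k 1) (μ := volume)
    (((hf.pd k).mul hg).integrable) ((hf.mul (hg.pd k)).integrable) ((hf.mul hg).integrable)
    (fun x _ => hf.diff x) (fun x _ => hg.diff x)
  have h2 : ∫ x, f x * pd k g x = - ∫ x, pd k f x * g x := h
  linarith

theorem ibp' (hf : Nice f) (hg : Nice g) (k : Fin 3) :
    ∫ x, f x * pd k g x = - ∫ x, pd k f x * g x := by
  rw [ibp hf hg k]; ring

end Toolkit

section Main

variable (Q : (Fin 3 → ℝ) → Matrix (Fin 3) (Fin 3) ℝ)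

private def qf (α β : Fin 3) : (Fin 3 → ℝ) → ℝ := fun y => Q y α β
private def Af (α β : Fin 3) : (Fin 3 → ℝ) → ℝ :=
  fun y => ∑ k : Fin 3, pd k (pd k (qf Q α β)) y
private def Gf (α β : Fin 3) : (Fin 3 → ℝ) → ℝ :=
  fun y => ∑ k : Fin 3, pd k (pd β (qf Q α k)) y
private def Sf : (Fin 3 → ℝ) → ℝ :=
  fun y => ∑ k : Fin 3, ∑ p : Fin 3, pd k (pd p (qf Q k p)) y
private def uf (α : Fin 3) : (Fin 3 → ℝ) → ℝ := fun y => ∑ β : Fin 3, pd β (qf Q α β) y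
private def wf (α : Fin 3) : (Fin 3 → ℝ) → ℝ := fun y => ∑ k : Fin 3, pd k (pd k (uf Q α)) y
private def Rf (α k : Fin 3) : (Fin 3 → ℝ) → ℝ :=
  fun y => ∑ γ : Fin 3, pd γ (pd γ (pd k (qf Q α k))) y

variable (hQ : ∀ i j : Fin 3, ContDiff ℝ (⊤ : ℕ∞) (fun y => Q y i j))
  (hQsupp : ∀ i j : Fin 3, HasCompactSupport (fun y => Q y i j))

include hQ hQsupp

private theorem nq (α β : Fin 3) : Nice (qf Q α β) := ⟨hQ α β, hQsupp α β⟩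

private theorem nA (α β : Fin 3) : Nice (Af Q α β) :=
  Nice.sum fun k _ => ((nq Q hQ hQsupp α β).pd k).pd k

private theorem nG (α β : Fin 3) : Nice (Gf Q α β) :=
  Nice.sum fun k _ => ((nq Q hQ hQsupp α k).pd β).pd k

private theorem nS : Nice (Sf Q) :=
  Nice.sum fun k _ => Nice.sum fun p _ => ((nq Q hQ hQsupp k p).pd p).pd k

private theorem nu (α : Fin 3) : Nice (uf Q α) :=
  Nice.sum fun β _ => (nq Q hQ hQsupp α β).pd β

private theorem nw (α : Fin 3) : Nice (wf Q α) :=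
  Nice.sum fun k _ => ((nu Q hQ hQsupp α).pd k).pd k

private theorem nR (α k : Fin 3) : Nice (Rf Q α k) :=
  Nice.sum fun γ _ => (((nq Q hQ hQsupp α k).pd k).pd γ).pd γ

omit hQ hQsupp in
private theorem int_sum3 {F : Fin 3 → (Fin 3 → ℝ) → ℝ} (h : ∀ i, Integrable (F i)) :
    ∫ x, ∑ i : Fin 3, F i x = ∑ i : Fin 3, ∫ x, F i x :=
  integral_finset_sum _ (fun i _ => h i)

omit hQ hQsupp in
private theorem Af_symm (hsymm : ∀ x : Fin 3 → ℝ, (Q x).IsSymm) (α β : Fin 3) :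
    Af Q β α = Af Q α β := by
  have : qf Q β α = qf Q α β := funext fun y => (hsymm y).apply α β
  unfold Af
  rw [this]

private theorem sum_Af_diag (htr : ∀ x : Fin 3 → ℝ, (Q x).trace = 0) :
    (fun y => ∑ α : Fin 3, Af Q α α y) = fun _ => 0 := by
  have h0 : (fun y => ∑ α : Fin 3, qf Q α α y) = fun _ => (0 : ℝ) := by
    funext y
    have := htr y
    simpa [Matrix.trace, Matrix.diag, qf] using this
  funext y
  simp only [Af]
  rw [Finset.sum_comm]
  have hk : ∀ k : Fin 3, ∑ α : Fin 3, pd k (pd k (qf Q α α)) y = 0 := by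
    intro k
    have h2 : ∑ α : Fin 3, pd k (pd k (qf Q α α)) y
        = pd k (fun z => ∑ α : Fin 3, pd k (qf Q α α) z) y :=
      (congrFun (pd_sum3 (fun α => ((nq Q hQ hQsupp α α).pd k).diff) k) y).symm
    have h1 : (fun z => ∑ α : Fin 3, pd k (qf Q α α) z)
        = pd k (fun w => ∑ α : Fin 3, qf Q α α w) :=
      (pd_sum3 (fun α => (nq Q hQ hQsupp α α).diff) k).symm
    rw [h2, h1, h0]
    simp [pd_zero_fn]
  simp [hk]

private theorem pdA_sum_div (α : Fin 3) :
    (fun x => ∑ β : Fin 3, pd β (Af Q α β) x) = wf Q α := by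
  have hstep : ∀ β : Fin 3, pd β (Af Q α β) = fun x => ∑ k : Fin 3,
      pd k (pd k (pd β (qf Q α β))) x := by
    intro β
    have h1 : pd β (Af Q α β) = fun x => ∑ k : Fin 3, pd β (pd k (pd k (qf Q α β))) x :=
      pd_sum3 (fun k => (((nq Q hQ hQsupp α β).pd k).pd k).diff) β
    rw [h1]
    funext x
    refine Finset.sum_congr rfl fun k _ => ?_
    rw [pd_comm ((nq Q hQ hQsupp α β).pd k).smooth β k,
        pd_comm (nq Q hQ hQsupp α β).smooth β k]
  funext x
  simp only [hstep]
  rw [Finset.sum_comm]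
  simp only [wf]
  refine Finset.sum_congr rfl fun k _ => ?_
  have h2 : ∑ β : Fin 3, pd k (pd k (pd β (qf Q α β))) x
      = pd k (fun z => ∑ β : Fin 3, pd k (pd β (qf Q α β)) z) x :=
    (congrFun (pd_sum3 (fun β => (((nq Q hQ hQsupp α β).pd β).pd k).diff) k) x).symm
  have h3 : (fun z => ∑ β : Fin 3, pd k (pd β (qf Q α β)) z) = pd k (uf Q α) :=
    (pd_sum3 (fun β => ((nq Q hQ hQsupp α β).pd β).diff) k).symm
  rw [h2, h3]

private theorem Rf_sum (α : Fin 3) :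
    (fun x => ∑ k : Fin 3, Rf Q α k x) = wf Q α := by
  funext x
  simp only [Rf, wf]
  rw [Finset.sum_comm]
  refine Finset.sum_congr rfl fun γ _ => ?_
  have h2 : ∑ k : Fin 3, pd γ (pd γ (pd k (qf Q α k))) x
      = pd γ (fun z => ∑ k : Fin 3, pd γ (pd k (qf Q α k)) z) x :=
    (congrFun (pd_sum3 (fun k => (((nq Q hQ hQsupp α k).pd k).pd γ).diff) γ) x).symm
  have h3 : (fun z => ∑ k : Fin 3, pd γ (pd k (qf Q α k)) z) = pd γ (uf Q α) :=
    (pd_sum3 (fun k => ((nq Q hQ hQsupp α k).pd k).diff) γ).symm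
  rw [h2, h3]

-- Key IBP step: fix α β k, sum over γ
private theorem step_ibp (α β k : Fin 3) :
    ∑ γ : Fin 3, ∫ x, pd γ (Af Q α β) x * pd γ (pd k (pd β (qf Q α k))) x
      = ∫ x, pd β (Af Q α β) x * Rf Q α k x := by
  have nq' := nq Q hQ hQsupp
  have nA' := nA Q hQ hQsupp α β
  have nF : Nice (pd k (pd β (qf Q α k))) := ((nq' α k).pd β).pd k
  -- commute derivatives: pd γ (pd γ F) = pd β (pd γ (pd γ (pd k q)))
  have hcomm : ∀ γ : Fin 3, pd γ (pd γ (pd k (pd β (qf Q α k))))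
      = pd β (pd γ (pd γ (pd k (qf Q α k)))) := by
    intro γ
    have e1 : pd k (pd β (qf Q α k)) = pd β (pd k (qf Q α k)) :=
      pd_comm (nq' α k).smooth k β
    have e2 : pd γ (pd β (pd k (qf Q α k))) = pd β (pd γ (pd k (qf Q α k))) :=
      pd_comm ((nq' α k).pd k).smooth γ β
    have e3 : pd γ (pd β (pd γ (pd k (qf Q α k)))) = pd β (pd γ (pd γ (pd k (qf Q α k)))) :=
      pd_comm (((nq' α k).pd k).pd γ).smooth γ β
    rw [e1, e2, e3]
  have hγ : ∀ γ : Fin 3, ∫ x, pd γ (Af Q α β) x * pd γ (pd k (pd β (qf Q α k))) x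
      = - ∫ x, Af Q α β x * pd β (pd γ (pd γ (pd k (qf Q α k)))) x := by
    intro γ
    rw [ibp nA' (nF.pd γ) γ, hcomm γ]
  simp only [hγ]
  rw [Finset.sum_neg_distrib,
    ← int_sum3 (fun γ => ((nA').mul (((((nq' α k).pd k).pd γ).pd γ).pd β)).integrable)]
  have hsum : (fun x => ∑ γ : Fin 3, Af Q α β x * pd β (pd γ (pd γ (pd k (qf Q α k)))) x)
      = fun x => Af Q α β x * pd β (Rf Q α k) x := by
    funext x
    rw [← Finset.mul_sum]
    congr 1
    have hR := pd_sum3 (F := fun γ => pd γ (pd γ (pd k (qf Q α k))))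
      (fun γ => ((((nq' α k).pd k).pd γ).pd γ).diff) β
    exact (congrFun hR x).symm
  rw [hsum, ibp' nA' (nR Q hQ hQsupp α k) β, neg_neg]

private theorem T1 (α : Fin 3) :
    ∑ β : Fin 3, ∑ γ : Fin 3, ∫ x, pd γ (Af Q α β) x * pd γ (Gf Q α β) x
      = ∫ x, wf Q α x * wf Q α x := by
  have nq' := nq Q hQ hQsupp
  have h1 : ∀ β γ : Fin 3, ∫ x, pd γ (Af Q α β) x * pd γ (Gf Q α β) x
      = ∑ k : Fin 3, ∫ x, pd γ (Af Q α β) x * pd γ (pd k (pd β (qf Q α k))) x := by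
    intro β γ
    have hG : pd γ (Gf Q α β) = fun x => ∑ k : Fin 3, pd γ (pd k (pd β (qf Q α k))) x :=
      pd_sum3 (fun k => (((nq' α k).pd β).pd k).diff) γ
    rw [hG, ← int_sum3 (fun k => (((nA Q hQ hQsupp α β).pd γ).mul
      ((((nq' α k).pd β).pd k).pd γ)).integrable)]
    congr 1
    funext x
    rw [Finset.mul_sum]
  simp only [h1]
  have h2 : ∀ β : Fin 3, ∑ γ : Fin 3, ∑ k : Fin 3,
      ∫ x, pd γ (Af Q α β) x * pd γ (pd k (pd β (qf Q α k))) x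
      = ∑ k : Fin 3, ∫ x, pd β (Af Q α β) x * Rf Q α k x := by
    intro β
    rw [Finset.sum_comm]
    exact Finset.sum_congr rfl fun k _ => step_ibp Q hQ hQsupp α β k
  simp only [h2]
  have h3 : ∀ β : Fin 3, ∑ k : Fin 3, ∫ x, pd β (Af Q α β) x * Rf Q α k x
      = ∫ x, pd β (Af Q α β) x * wf Q α x := by
    intro β
    rw [← int_sum3 (fun k => (((nA Q hQ hQsupp α β).pd β).mul (nR Q hQ hQsupp α k)).integrable)]
    have e : (fun x => ∑ k : Fin 3, pd β (Af Q α β) x * Rf Q α k x)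
        = fun x => pd β (Af Q α β) x * wf Q α x := by
      funext x
      rw [← Finset.mul_sum, congrFun (Rf_sum Q hQ hQsupp α) x]
    rw [e]
  simp only [h3]
  rw [← int_sum3 (fun β => (((nA Q hQ hQsupp α β).pd β).mul (nw Q hQ hQsupp α)).integrable)]
  congr 1
  funext x
  rw [← Finset.sum_mul, congrFun (pdA_sum_div Q hQ hQsupp α) x]

omit hQ hQsupp in
private theorem X2eq (hsymm : ∀ x : Fin 3 → ℝ, (Q x).IsSymm) :
    ∑ α : Fin 3, ∑ β : Fin 3, ∑ γ : Fin 3, ∫ x, pd γ (Af Q α β) x * pd γ (Gf Q β α) x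
      = ∑ α : Fin 3, ∑ β : Fin 3, ∑ γ : Fin 3, ∫ x, pd γ (Af Q α β) x * pd γ (Gf Q α β) x := by
  rw [Finset.sum_comm]
  refine Finset.sum_congr rfl fun a _ => Finset.sum_congr rfl fun b _ =>
    Finset.sum_congr rfl fun γ _ => ?_
  rw [Af_symm Q hsymm a b]

private theorem X3zero (htr : ∀ x : Fin 3 → ℝ, (Q x).trace = 0) (γ : Fin 3) :
    ∑ α : Fin 3, ∫ x, pd γ (Af Q α α) x * pd γ (Sf Q) x = 0 := by
  rw [← int_sum3 (fun α =>
    (((nA Q hQ hQsupp α α).pd γ).mul ((nS Q hQ hQsupp).pd γ)).integrable)]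
  have e : (fun x => ∑ α : Fin 3, pd γ (Af Q α α) x * pd γ (Sf Q) x)
      = fun _ => (0 : ℝ) := by
    funext x
    rw [← Finset.sum_mul]
    have h1 : ∑ α : Fin 3, pd γ (Af Q α α) x
        = pd γ (fun y => ∑ α : Fin 3, Af Q α α y) x :=
      (congrFun (pd_sum3 (fun α => (nA Q hQ hQsupp α α).diff) γ) x).symm
    rw [h1, sum_Af_diag Q hQ hQsupp htr]
    simp [pd_zero_fn]
  rw [e]
  simp

omit hQ hQsupp in
private theorem int_sum333 {F : Fin 3 → Fin 3 → Fin 3 → (Fin 3 → ℝ) → ℝ}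
    (h : ∀ a b c, Nice (F a b c)) :
    ∫ x, ∑ a : Fin 3, ∑ b : Fin 3, ∑ c : Fin 3, F a b c x
      = ∑ a : Fin 3, ∑ b : Fin 3, ∑ c : Fin 3, ∫ x, F a b c x := by
  rw [int_sum3 (F := fun a x => ∑ b : Fin 3, ∑ c : Fin 3, F a b c x)
    (fun a => (Nice.sum fun b _ => Nice.sum fun c _ => h a b c).integrable)]
  refine Finset.sum_congr rfl fun a _ => ?_
  rw [int_sum3 (F := fun b x => ∑ c : Fin 3, F a b c x)
    (fun b => (Nice.sum fun c _ => h a b c).integrable)]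
  exact Finset.sum_congr rfl fun b _ => int_sum3 fun c => (h a b c).integrable

private def Bf (L₂ L₃ : ℝ) (α β γ : Fin 3) : (Fin 3 → ℝ) → ℝ :=
  fun x => (L₂ + L₃) / 2 * (pd γ (Gf Q α β) x + pd γ (Gf Q β α) x
    - 2 / 3 * (if α = β then (1 : ℝ) else 0) * pd γ (Sf Q) x)

private theorem nB (L₂ L₃ : ℝ) (α β γ : Fin 3) : Nice (Bf Q L₂ L₃ α β γ) :=
  ((((nG Q hQ hQsupp α β).pd γ).add ((nG Q hQ hQsupp β α).pd γ)).sub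
    (((nS Q hQ hQsupp).pd γ).const_mul _)).const_mul _

private theorem pd_MQ (L₁ L₂ L₃ : ℝ) (γ α β : Fin 3) (x : Fin 3 → ℝ) :
    pd γ (MQ L₁ L₂ L₃ Q α β) x = L₁ * pd γ (Af Q α β) x + Bf Q L₂ L₃ α β γ x := by
  have e : MQ L₁ L₂ L₃ Q α β = fun x => L₁ * Af Q α β x
      + (L₂ + L₃) / 2 * (Gf Q α β x + Gf Q β α x
          - 2 / 3 * (if α = β then (1 : ℝ) else 0) * Sf Q x) := rfl
  have dA := (nA Q hQ hQsupp α β).diff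
  have dG1 := (nG Q hQ hQsupp α β).diff
  have dG2 := (nG Q hQ hQsupp β α).diff
  have dS := (nS Q hQ hQsupp).diff
  have dAdd : Differentiable ℝ (fun y => Gf Q α β y + Gf Q β α y) := dG1.add dG2
  have dC : Differentiable ℝ (fun y => Gf Q α β y + Gf Q β α y
      - 2 / 3 * (if α = β then (1 : ℝ) else 0) * Sf Q y) := dAdd.sub (dS.const_mul _)
  rw [e, pd_add (dA.const_mul L₁) (dC.const_mul _),
    pd_const_mul dA L₁, pd_const_mul dC _,
    pd_sub dAdd (dS.const_mul _), pd_add dG1 dG2, pd_const_mul dS _]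
  rfl

private theorem nMQ (L₁ L₂ L₃ : ℝ) (α β : Fin 3) : Nice (MQ L₁ L₂ L₃ Q α β) := by
  have e : MQ L₁ L₂ L₃ Q α β = fun x => L₁ * Af Q α β x
      + (L₂ + L₃) / 2 * (Gf Q α β x + Gf Q β α x
          - 2 / 3 * (if α = β then (1 : ℝ) else 0) * Sf Q x) := rfl
  rw [e]
  exact ((nA Q hQ hQsupp α β).const_mul L₁).add
    ((((nG Q hQ hQsupp α β).add (nG Q hQ hQsupp β α)).sub
      ((nS Q hQ hQsupp).const_mul _)).const_mul _)

private theorem crossEq (L₂ L₃ : ℝ) (hsymm : ∀ x : Fin 3 → ℝ, (Q x).IsSymm)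
    (htr : ∀ x : Fin 3 → ℝ, (Q x).trace = 0) :
    ∫ x, ∑ α : Fin 3, ∑ β : Fin 3, ∑ γ : Fin 3,
        pd γ (Af Q α β) x * Bf Q L₂ L₃ α β γ x
      = (L₂ + L₃) * ∫ x, ∑ α : Fin 3, (wf Q α x) ^ 2 := by
  have nA' := nA Q hQ hQsupp
  have nG' := nG Q hQ hQsupp
  have nS' := nS Q hQ hQsupp
  rw [int_sum333 (fun α β γ => ((nA' α β).pd γ).mul (nB Q hQ hQsupp L₂ L₃ α β γ))]
  have hterm : ∀ α β γ : Fin 3, ∫ x, pd γ (Af Q α β) x * Bf Q L₂ L₃ α β γ x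
      = (L₂ + L₃) / 2 * (∫ x, pd γ (Af Q α β) x * pd γ (Gf Q α β) x)
        + (L₂ + L₃) / 2 * (∫ x, pd γ (Af Q α β) x * pd γ (Gf Q β α) x)
        - ((L₂ + L₃) / 2 * (2 / 3) * (if α = β then (1 : ℝ) else 0))
            * ∫ x, pd γ (Af Q α β) x * pd γ (Sf Q) x := by
    intro α β γ
    have e : (fun x => pd γ (Af Q α β) x * Bf Q L₂ L₃ α β γ x)
        = fun x => ((L₂ + L₃) / 2 * (pd γ (Af Q α β) x * pd γ (Gf Q α β) x)
            + (L₂ + L₃) / 2 * (pd γ (Af Q α β) x * pd γ (Gf Q β α) x))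
          - ((L₂ + L₃) / 2 * (2 / 3) * (if α = β then (1 : ℝ) else 0))
              * (pd γ (Af Q α β) x * pd γ (Sf Q) x) := by
      funext x
      simp only [Bf]
      ring
    have i1 : Integrable (fun x => pd γ (Af Q α β) x * pd γ (Gf Q α β) x) :=
      (((nA' α β).pd γ).mul ((nG' α β).pd γ)).integrable
    have i2 : Integrable (fun x => pd γ (Af Q α β) x * pd γ (Gf Q β α) x) :=
      (((nA' α β).pd γ).mul ((nG' β α).pd γ)).integrable
    have i3 : Integrable (fun x => pd γ (Af Q α β) x * pd γ (Sf Q) x) :=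
      (((nA' α β).pd γ).mul ((nS').pd γ)).integrable
    have i12 : Integrable (fun x => (L₂ + L₃) / 2 * (pd γ (Af Q α β) x * pd γ (Gf Q α β) x)
        + (L₂ + L₃) / 2 * (pd γ (Af Q α β) x * pd γ (Gf Q β α) x)) :=
      (i1.const_mul _).add (i2.const_mul _)
    rw [e, integral_sub i12 (i3.const_mul _),
      integral_add (i1.const_mul _) (i2.const_mul _),
      integral_const_mul, integral_const_mul, integral_const_mul]
  simp only [hterm]
  simp only [Finset.sum_sub_distrib, Finset.sum_add_distrib, ← Finset.mul_sum]
  have hA1 : ∑ α : Fin 3, ∑ β : Fin 3, ∑ γ : Fin 3,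
      ∫ x, pd γ (Af Q α β) x * pd γ (Gf Q α β) x
      = ∑ α : Fin 3, ∫ x, wf Q α x * wf Q α x :=
    Finset.sum_congr rfl fun α _ => T1 Q hQ hQsupp α
  have hA2 : ∑ α : Fin 3, ∑ β : Fin 3, ∑ γ : Fin 3,
      ∫ x, pd γ (Af Q α β) x * pd γ (Gf Q β α) x
      = ∑ α : Fin 3, ∫ x, wf Q α x * wf Q α x := by
    rw [X2eq Q hsymm]; exact hA1
  have hA3 : ∑ α : Fin 3, ∑ β : Fin 3,
      ((L₂ + L₃) / 2 * (2 / 3) * (if α = β then (1 : ℝ) else 0))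
        * ∑ γ : Fin 3, ∫ x, pd γ (Af Q α β) x * pd γ (Sf Q) x = 0 := by
    have hβ : ∀ α : Fin 3, ∑ β : Fin 3,
        ((L₂ + L₃) / 2 * (2 / 3) * (if α = β then (1 : ℝ) else 0))
          * ∑ γ : Fin 3, ∫ x, pd γ (Af Q α β) x * pd γ (Sf Q) x
        = (L₂ + L₃) / 2 * (2 / 3) * ∑ γ : Fin 3,
            ∫ x, pd γ (Af Q α α) x * pd γ (Sf Q) x := by
      intro α
      rw [Finset.sum_eq_single α]
      · simp
      · intro b _ hb
        simp [Ne.symm hb]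
      · simp
    simp only [hβ]
    rw [← Finset.mul_sum, Finset.sum_comm]
    simp [X3zero Q hQ hQsupp htr]
  rw [hA1, hA2, hA3,
    int_sum3 (F := fun α x => (wf Q α x) ^ 2) (fun α => ((nw Q hQ hQsupp α).sq).integrable)]
  have hw : ∀ α : Fin 3, ∫ x, wf Q α x * wf Q α x = ∫ x, (wf Q α x) ^ 2 := by
    intro α
    congr 1
    funext x
    ring
  simp only [hw]
  ring

end Main

theorem grad_MQ_coercivity (L₁ L₂ L₃ : ℝ) (hL₁ : 0 < L₁) (hL₂₃ : 0 ≤ L₂ + L₃)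
    (Q : (Fin 3 → ℝ) → Matrix (Fin 3) (Fin 3) ℝ)
    (hQ : ∀ i j : Fin 3, ContDiff ℝ (⊤ : ℕ∞) (fun y => Q y i j))
    (hQsupp : ∀ i j : Fin 3, HasCompactSupport (fun y => Q y i j))
    (hsymm : ∀ x : Fin 3 → ℝ, (Q x).IsSymm) (htr : ∀ x : Fin 3 → ℝ, (Q x).trace = 0) :
    L₁ ^ 2 * (∫ x : Fin 3 → ℝ,
          ∑ α : Fin 3, ∑ β : Fin 3, ∑ γ : Fin 3,
            (pd γ (fun y => ∑ k : Fin 3, pd k (pd k (fun z => Q z α β)) y) x) ^ 2)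
      + 2 * L₁ * (L₂ + L₃) * (∫ x : Fin 3 → ℝ,
          ∑ α : Fin 3,
            (∑ k : Fin 3,
              pd k (pd k (fun y => ∑ β : Fin 3, pd β (fun z => Q z α β) y)) x) ^ 2) ≤
    ∫ x : Fin 3 → ℝ,
      ∑ α : Fin 3, ∑ β : Fin 3, ∑ γ : Fin 3,
        (pd γ (MQ L₁ L₂ L₃ Q α β) x) ^ 2 := by
  show L₁ ^ 2 * (∫ x : Fin 3 → ℝ, ∑ α : Fin 3, ∑ β : Fin 3, ∑ γ : Fin 3,
        (pd γ (Af Q α β) x) ^ 2)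
      + 2 * L₁ * (L₂ + L₃) * (∫ x : Fin 3 → ℝ, ∑ α : Fin 3, (wf Q α x) ^ 2)
      ≤ ∫ x : Fin 3 → ℝ, ∑ α : Fin 3, ∑ β : Fin 3, ∑ γ : Fin 3,
          (pd γ (MQ L₁ L₂ L₃ Q α β) x) ^ 2
  have nA' := nA Q hQ hQsupp
  have nB' := nB Q hQ hQsupp L₂ L₃
  have nM := nMQ Q hQ hQsupp L₁ L₂ L₃
  have nLHS : Nice (fun x => ∑ α : Fin 3, ∑ β : Fin 3, ∑ γ : Fin 3,
      (L₁ ^ 2 * (pd γ (Af Q α β) x) ^ 2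
        + 2 * L₁ * (pd γ (Af Q α β) x * Bf Q L₂ L₃ α β γ x))) :=
    Nice.sum fun α _ => Nice.sum fun β _ => Nice.sum fun γ _ =>
      ((((nA' α β).pd γ).sq.const_mul _).add
        ((((nA' α β).pd γ).mul (nB' α β γ)).const_mul _))
  have nRHS : Nice (fun x => ∑ α : Fin 3, ∑ β : Fin 3, ∑ γ : Fin 3,
      (pd γ (MQ L₁ L₂ L₃ Q α β) x) ^ 2) :=
    Nice.sum fun α _ => Nice.sum fun β _ => Nice.sum fun γ _ => ((nM α β).pd γ).sq
  have key : ∀ x, ∑ α : Fin 3, ∑ β : Fin 3, ∑ γ : Fin 3,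
      (L₁ ^ 2 * (pd γ (Af Q α β) x) ^ 2
        + 2 * L₁ * (pd γ (Af Q α β) x * Bf Q L₂ L₃ α β γ x))
      ≤ ∑ α : Fin 3, ∑ β : Fin 3, ∑ γ : Fin 3, (pd γ (MQ L₁ L₂ L₃ Q α β) x) ^ 2 := by
    intro x
    refine Finset.sum_le_sum fun α _ => Finset.sum_le_sum fun β _ =>
      Finset.sum_le_sum fun γ _ => ?_
    rw [pd_MQ Q hQ hQsupp L₁ L₂ L₃ γ α β x]
    nlinarith [sq_nonneg (Bf Q L₂ L₃ α β γ x)]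
  have mono := integral_mono nLHS.integrable nRHS.integrable key
  have isq : Integrable (fun x => ∑ α : Fin 3, ∑ β : Fin 3, ∑ γ : Fin 3,
      L₁ ^ 2 * (pd γ (Af Q α β) x) ^ 2) :=
    (Nice.sum fun α _ => Nice.sum fun β _ => Nice.sum fun γ _ =>
      ((nA' α β).pd γ).sq.const_mul _).integrable
  have icr : Integrable (fun x => ∑ α : Fin 3, ∑ β : Fin 3, ∑ γ : Fin 3,
      2 * L₁ * (pd γ (Af Q α β) x * Bf Q L₂ L₃ α β γ x)) :=
    (Nice.sum fun α _ => Nice.sum fun β _ => Nice.sum fun γ _ =>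
      (((nA' α β).pd γ).mul (nB' α β γ)).const_mul _).integrable
  have efun : (fun x => ∑ α : Fin 3, ∑ β : Fin 3, ∑ γ : Fin 3,
      (L₁ ^ 2 * (pd γ (Af Q α β) x) ^ 2
        + 2 * L₁ * (pd γ (Af Q α β) x * Bf Q L₂ L₃ α β γ x)))
      = fun x => (∑ α : Fin 3, ∑ β : Fin 3, ∑ γ : Fin 3, L₁ ^ 2 * (pd γ (Af Q α β) x) ^ 2)
        + (∑ α : Fin 3, ∑ β : Fin 3, ∑ γ : Fin 3,
            2 * L₁ * (pd γ (Af Q α β) x * Bf Q L₂ L₃ α β γ x)) := by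
    funext x
    simp [Finset.sum_add_distrib]
  rw [efun, integral_add isq icr] at mono
  have e1 : ∫ x, ∑ α : Fin 3, ∑ β : Fin 3, ∑ γ : Fin 3, L₁ ^ 2 * (pd γ (Af Q α β) x) ^ 2
      = L₁ ^ 2 * ∫ x, ∑ α : Fin 3, ∑ β : Fin 3, ∑ γ : Fin 3, (pd γ (Af Q α β) x) ^ 2 := by
    rw [← integral_const_mul]
    congr 1
    funext x
    simp [Finset.mul_sum]
  have e2 : ∫ x, ∑ α : Fin 3, ∑ β : Fin 3, ∑ γ : Fin 3,
      2 * L₁ * (pd γ (Af Q α β) x * Bf Q L₂ L₃ α β γ x)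
      = 2 * L₁ * ∫ x, ∑ α : Fin 3, ∑ β : Fin 3, ∑ γ : Fin 3,
          pd γ (Af Q α β) x * Bf Q L₂ L₃ α β γ x := by
    rw [← integral_const_mul]
    congr 1
    funext x
    simp [Finset.mul_sum]
  rw [e1, e2, crossEq Q hQ hQsupp L₂ L₃ hsymm htr] at mono
  have heq : 2 * L₁ * ((L₂ + L₃) * ∫ x, ∑ α : Fin 3, (wf Q α x) ^ 2)
      = 2 * L₁ * (L₂ + L₃) * ∫ x, ∑ α : Fin 3, (wf Q α x) ^ 2 := by ring
  rw [heq] at mono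
  exact mono
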